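/- arXiv:2603.29720 — 2 statements merged into one kernel-verified Lean document; each statement's English description precedes it below -/
import Mathlib

section
/- Let (X,T) be a topological dynamical system. For every T-invariant Borel probability measure μ on X, h̃_μ(T) = sup{ h̃_μ(T,Φ) : Φ a positive continuous partition of unity on X }, where a partition of unity is positive if each of its functions is strictly positive everywhere. -/
open MeasureTheory Filter Set

/-! ### Partitions of unity -/

/-- A finite partition of unity on `X`: a finite family of functions `X → [0,1]`
summing to `1` everywhere. -/
structure PartUnity (X : Type*) where
  n : ℕ
  f : Fin n → X → ℝ
  nonneg : ∀ i x, 0 ≤ f i x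
  le_one : ∀ i x, f i x ≤ 1
  sum_one : ∀ x, ∑ i, f i x = 1

namespace PartUnity

variable {X Y : Type*}

/-- A continuous partition of unity. -/
def Cont [TopologicalSpace X] (Φ : PartUnity X) : Prop := ∀ i, Continuous (Φ.f i)

/-- A measurable partition of unity. -/
def Meas [MeasurableSpace X] (Φ : PartUnity X) : Prop := ∀ i, Measurable (Φ.f i)

/-- A positive partition of unity. -/
def Pos (Φ : PartUnity X) : Prop := ∀ i x, 0 < Φ.f i x

/-- The join `Φ ∨ Ψ = {φ·ψ : φ ∈ Φ, ψ ∈ Ψ}` of two partitions of unity. -/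
def join (Φ Ψ : PartUnity X) : PartUnity X where
  n := Φ.n * Ψ.n
  f k x := Φ.f (finProdFinEquiv.symm k).1 x * Ψ.f (finProdFinEquiv.symm k).2 x
  nonneg k x := mul_nonneg (Φ.nonneg _ x) (Ψ.nonneg _ x)
  le_one k x := mul_le_one₀ (Φ.le_one _ x) (Ψ.nonneg _ x) (Ψ.le_one _ x)
  sum_one x := by
    rw [← Equiv.sum_comp (finProdFinEquiv : Fin Φ.n × Fin Ψ.n ≃ Fin (Φ.n * Ψ.n))
      (fun k => Φ.f (finProdFinEquiv.symm k).1 x * Ψ.f (finProdFinEquiv.symm k).2 x)]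
    simp only [Equiv.symm_apply_apply]
    rw [Fintype.sum_prod_type]
    dsimp only
    rw [← Finset.sum_mul_sum, Φ.sum_one x, Ψ.sum_one x, one_mul]

/-- Pull back a partition of unity by a map: `TΦ = {φ ∘ T : φ ∈ Φ}`. -/
def comp (Φ : PartUnity X) (T : Y → X) : PartUnity Y where
  n := Φ.n
  f i y := Φ.f i (T y)
  nonneg i y := Φ.nonneg i (T y)
  le_one i y := Φ.le_one i (T y)
  sum_one y := Φ.sum_one (T y)

/-- The trivial partition of unity `{1}`. -/
def triv (X : Type*) : PartUnity X where
  n := 1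
  f _ _ := 1
  nonneg _ _ := zero_le_one
  le_one _ _ := le_rfl
  sum_one _ := by simp

/-- `dyn T Φ n` is the dynamical join `Φ₀ⁿ⁻¹ = ⋁_{i=0}^{n-1} TⁱΦ`
(joined with a harmless trivial factor). -/
def dyn (T : X → X) (Φ : PartUnity X) : ℕ → PartUnity X
  | 0 => triv X
  | n + 1 => Φ.join ((dyn T Φ n).comp T)

/-- The product partition of unity `Φ ⊗ Ψ` on `X × Y`. -/
def prod (Φ : PartUnity X) (Ψ : PartUnity Y) : PartUnity (X × Y) where
  n := Φ.n * Ψ.n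
  f k p := Φ.f (finProdFinEquiv.symm k).1 p.1 * Ψ.f (finProdFinEquiv.symm k).2 p.2
  nonneg k p := mul_nonneg (Φ.nonneg _ _) (Ψ.nonneg _ _)
  le_one k p := mul_le_one₀ (Φ.le_one _ _) (Ψ.nonneg _ _) (Ψ.le_one _ _)
  sum_one p := by
    rw [← Equiv.sum_comp (finProdFinEquiv : Fin Φ.n × Fin Ψ.n ≃ Fin (Φ.n * Ψ.n))
      (fun k => Φ.f (finProdFinEquiv.symm k).1 p.1 * Ψ.f (finProdFinEquiv.symm k).2 p.2)]
    simp only [Equiv.symm_apply_apply]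
    rw [Fintype.sum_prod_type]
    dsimp only
    rw [← Finset.sum_mul_sum, Φ.sum_one p.1, Ψ.sum_one p.2, one_mul]

/-- The diameter of a partition of unity: the maximum of the diameters of the
supports of its members. -/
noncomputable def diam [PseudoMetricSpace X] (Φ : PartUnity X) : ℝ :=
  ⨆ i, Metric.diam (tsupport (Φ.f i))

end PartUnity

/-! ### Metric entropy via partitions of unity -/

variable {X Y : Type*}

/-- The static entropy `H̃_μ(Φ) = Σ_φ ( −μ(φ) log μ(φ) + μ(φ log φ) )`. -/
noncomputable def statEnt [MeasurableSpace X] (μ : Measure X) (Φ : PartUnity X) : ℝ :=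
  ∑ i, (-((∫ x, Φ.f i x ∂μ) * Real.log (∫ x, Φ.f i x ∂μ)) +
    ∫ x, Φ.f i x * Real.log (Φ.f i x) ∂μ)

/-- The conditional measure `μ_ψ`, determined by `μ_ψ(φ) = μ(φψ)/μ(ψ)`. -/
noncomputable def condMeas [MeasurableSpace X] (μ : Measure X) (ψ : X → ℝ) : Measure X :=
  (ENNReal.ofReal (∫ x, ψ x ∂μ))⁻¹ • μ.withDensity (fun x => ENNReal.ofReal (ψ x))

/-- The conditional static entropy `H̃_μ(Φ | Ψ) = Σ_ψ μ(ψ) H̃_{μ_ψ}(Φ)`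
(terms with `μ(ψ) = 0` vanish since they are multiplied by `μ(ψ) = 0`). -/
noncomputable def condStatEnt [MeasurableSpace X] (μ : Measure X) (Φ Ψ : PartUnity X) : ℝ :=
  ∑ j, (∫ x, Ψ.f j x ∂μ) * statEnt (condMeas μ (Ψ.f j)) Φ

/-- The local metric entropy `h̃_μ(T,Φ) = lim_n H̃_μ(Φ₀ⁿ⁻¹)/n`. -/
noncomputable def locEnt [MeasurableSpace X] (T : X → X) (μ : Measure X) (Φ : PartUnity X) : ℝ :=
  Filter.atTop.limsup fun n : ℕ => statEnt μ (PartUnity.dyn T Φ n) / (n : ℝ)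

/-- The local conditional metric entropy `h̃_μ(T,Φ|Ψ) = lim_n H̃_μ(Φ₀ⁿ⁻¹|Ψ₀ⁿ⁻¹)/n`. -/
noncomputable def condLocEnt [MeasurableSpace X] (T : X → X) (μ : Measure X)
    (Φ Ψ : PartUnity X) : ℝ :=
  Filter.atTop.limsup fun n : ℕ =>
    condStatEnt μ (PartUnity.dyn T Φ n) (PartUnity.dyn T Ψ n) / (n : ℝ)

/-- The metric entropy `h̃_μ(T)`: supremum of `h̃_μ(T,Φ)` over continuous
partitions of unity. -/
noncomputable def metEnt [TopologicalSpace X] [MeasurableSpace X]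
    (T : X → X) (μ : Measure X) : EReal :=
  ⨆ Φ : {Φ : PartUnity X // Φ.Cont}, ((locEnt T μ Φ.1 : ℝ) : EReal)

/-! ### Topological entropy via partitions of unity -/

/-- The topological static entropy `H̃(Φ) = Σ_φ sup φ`. -/
noncomputable def topStat (Φ : PartUnity X) : ℝ := ∑ i, ⨆ x, Φ.f i x

/-- The local topological entropy `h̃(T,Φ) = lim_n (1/n) log H̃(Φ₀ⁿ⁻¹)`. -/
noncomputable def topLocEnt (T : X → X) (Φ : PartUnity X) : ℝ :=
  Filter.atTop.limsup fun n : ℕ => Real.log (topStat (PartUnity.dyn T Φ n)) / (n : ℝ)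

/-- The topological entropy `h̃_top(T)`: supremum of `h̃(T,Φ)` over continuous
partitions of unity. -/
noncomputable def topEnt [TopologicalSpace X] (T : X → X) : EReal :=
  ⨆ Φ : {Φ : PartUnity X // Φ.Cont}, ((topLocEnt T Φ.1 : ℝ) : EReal)

/-! ### Classical Kolmogorov–Sinai entropy -/

/-- A finite Borel partition of `X` (indexed; atoms may be empty). -/
structure FinBorelPart (X : Type*) [MeasurableSpace X] where
  n : ℕ
  A : Fin n → Set X
  meas : ∀ i, MeasurableSet (A i)
  disj : ∀ i j, i ≠ j → Disjoint (A i) (A j)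
  cover : ⋃ i, A i = Set.univ

/-- Local Kolmogorov–Sinai entropy `h_μ(T,𝒜) = lim_n (1/n) Σ_{A ∈ 𝒜₀ⁿ⁻¹} −μ(A) log μ(A)`. -/
noncomputable def ksLocEnt [MeasurableSpace X] (T : X → X) (μ : Measure X)
    (P : FinBorelPart X) : ℝ :=
  Filter.atTop.limsup fun n : ℕ =>
    (∑ σ : Fin n → Fin P.n,
      Real.negMulLog (μ (⋂ i : Fin n, T^[(i : ℕ)] ⁻¹' P.A (σ i))).toReal) / (n : ℝ)

/-- The Kolmogorov–Sinai metric entropy `h_μ(T)`. -/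
noncomputable def ksEnt [MeasurableSpace X] (T : X → X) (μ : Measure X) : EReal :=
  ⨆ P : FinBorelPart X, ((ksLocEnt T μ P : ℝ) : EReal)

/-! ### Classical topological entropy via open covers -/

/-- A finite open cover of `X`. -/
structure FinOpenCover (X : Type*) [TopologicalSpace X] where
  n : ℕ
  U : Fin n → Set X
  opn : ∀ i, IsOpen (U i)
  cov : ⋃ i, U i = Set.univ

/-- The member `⋂_{i<n} T^{-i} U_{σ(i)}` of the dynamical refinement of a cover. -/
def dynSet (T : X → X) {m : ℕ} (U : Fin m → Set X) (n : ℕ) (σ : Fin n → Fin m) : Set X :=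
  ⋂ i : Fin n, T^[(i : ℕ)] ⁻¹' U (σ i)

/-- Minimal cardinality of a subfamily of `V` covering `S`. -/
noncomputable def coverNum {α : Type*} [Fintype α] (V : α → Set X) (S : Set X) : ℕ :=
  sInf {k | ∃ t : Finset α, t.card = k ∧ S ⊆ ⋃ i ∈ t, V i}

/-- The local classical topological entropy `h(T,𝒰)` of an open cover. -/
noncomputable def covLocEnt [TopologicalSpace X] (T : X → X) (C : FinOpenCover X) : ℝ :=
  Filter.atTop.limsup fun n : ℕ =>
    Real.log ((coverNum (fun σ : Fin n → Fin C.n => dynSet T C.U n σ) Set.univ : ℕ) : ℝ) / (n : ℝ)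

/-- The classical topological entropy `h_top(T)` via open covers. -/
noncomputable def topEntCov [TopologicalSpace X] (T : X → X) : EReal :=
  ⨆ C : FinOpenCover X, ((covLocEnt T C : ℝ) : EReal)

/-! ### Misiurewicz topological tail entropy -/

/-- The local conditional topological entropy `h(𝒰|𝒱)` of two open covers. -/
noncomputable def misCondLoc [TopologicalSpace X] (T : X → X) (CU CV : FinOpenCover X) : ℝ :=
  Filter.atTop.limsup fun n : ℕ =>
    Real.log (((⨆ τ : Fin n → Fin CV.n,
      coverNum (fun σ : Fin n → Fin CU.n => dynSet T CU.U n σ) (dynSet T CV.U n τ) : ℕ)) : ℝ) / (n : ℝ)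

/-- The conditional topological entropy `h(T|𝒱) = sup_𝒰 h(𝒰|𝒱)`. -/
noncomputable def misCond [TopologicalSpace X] (T : X → X) (CV : FinOpenCover X) : EReal :=
  ⨆ CU : FinOpenCover X, ((misCondLoc T CU CV : ℝ) : EReal)

/-- Misiurewicz's topological tail entropy `h*(T) = inf_𝒱 h(T|𝒱)`. -/
noncomputable def misTail [TopologicalSpace X] (T : X → X) : EReal :=
  ⨅ CV : FinOpenCover X, misCond T CV

/-! ### Topological tail entropy via partitions of unity -/

/-- `H̃(Φ|ψ) = Σ_φ sup_{supp ψ} φ`. -/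
noncomputable def condTopStatPU [TopologicalSpace X] (Φ : PartUnity X) (ψ : X → ℝ) : ℝ :=
  ∑ i, ⨆ x ∈ tsupport ψ, Φ.f i x

/-- The weight set `D(Ψ) = {a : inf ψ ≤ a_ψ ≤ sup ψ, Σ a_ψ = 1}`. -/
def weights (Ψ : PartUnity X) : Set (Fin Ψ.n → ℝ) :=
  {a | (∀ j, (⨅ x, Ψ.f j x) ≤ a j ∧ a j ≤ ⨆ x, Ψ.f j x) ∧ ∑ j, a j = 1}

/-- `H̃_n(Φ|Ψ) = sup_{a ∈ D(Ψ₀ⁿ⁻¹)} Σ_ψ a_ψ H̃(Φ₀ⁿ⁻¹|ψ)`. -/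
noncomputable def tailStat [TopologicalSpace X] (T : X → X) (Φ Ψ : PartUnity X) (n : ℕ) : ℝ :=
  sSup {r | ∃ a ∈ weights (PartUnity.dyn T Ψ n),
    r = ∑ j, a j * condTopStatPU (PartUnity.dyn T Φ n) ((PartUnity.dyn T Ψ n).f j)}

/-- The local conditional topological entropy `h̃(Φ|Ψ) = limsup_n (1/n) log H̃_n(Φ|Ψ)`. -/
noncomputable def tailLoc [TopologicalSpace X] (T : X → X) (Φ Ψ : PartUnity X) : ℝ :=
  Filter.atTop.limsup fun n : ℕ => Real.log (tailStat T Φ Ψ n) / (n : ℝ)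

/-- The conditional topological entropy `h̃(T|Ψ) = sup_Φ h̃(Φ|Ψ)` over continuous `Φ`. -/
noncomputable def condTopEntPU [TopologicalSpace X] (T : X → X) (Ψ : PartUnity X) : EReal :=
  ⨆ Φ : {Φ : PartUnity X // Φ.Cont}, ((tailLoc T Φ.1 Ψ : ℝ) : EReal)

/-- The topological tail entropy `h̃*(T) = inf_Ψ h̃(T|Ψ)` over continuous `Ψ`. -/
noncomputable def tailEntPU [TopologicalSpace X] (T : X → X) : EReal :=
  ⨅ Ψ : {Ψ : PartUnity X // Ψ.Cont}, condTopEntPU T Ψ.1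

/-! ### Pressures -/

/-- The Birkhoff sum `S_n g = Σ_{i<n} g ∘ Tⁱ`. -/
def birkhoff (T : X → X) (g : X → ℝ) (n : ℕ) (x : X) : ℝ :=
  ∑ i ∈ Finset.range n, g (T^[i] x)

/-- The static pressure `P̃(T,g,Φ,n) = Σ_{φ ∈ Φ₀ⁿ⁻¹} sup (φ e^{S_n g})`. -/
noncomputable def puPressStat (T : X → X) (g : X → ℝ) (Φ : PartUnity X) (n : ℕ) : ℝ :=
  ∑ i, ⨆ x, (PartUnity.dyn T Φ n).f i x * Real.exp (birkhoff T g n x)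

/-- The local topological pressure `P̃_top(T,g,Φ) = lim_n (1/n) log P̃(T,g,Φ,n)`. -/
noncomputable def puLocPress (T : X → X) (g : X → ℝ) (Φ : PartUnity X) : ℝ :=
  Filter.atTop.limsup fun n : ℕ => Real.log (puPressStat T g Φ n) / (n : ℝ)

/-- The topological pressure `P̃_top(T,g)` via continuous partitions of unity. -/
noncomputable def puTopPress [TopologicalSpace X] (T : X → X) (g : X → ℝ) : EReal :=
  ⨆ Φ : {Φ : PartUnity X // Φ.Cont}, ((puLocPress T g Φ.1 : ℝ) : EReal)

/-- The classical static pressure of an open cover: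
`inf { Σ_{V ∈ 𝒱} sup_V e^{S_n g} : 𝒱 a subcover of 𝒰₀ⁿ⁻¹ }`. -/
noncomputable def covPressStat [TopologicalSpace X] (T : X → X) (g : X → ℝ)
    (C : FinOpenCover X) (n : ℕ) : ℝ :=
  sInf {r | ∃ t : Finset (Fin n → Fin C.n),
    (Set.univ ⊆ ⋃ σ ∈ t, dynSet T C.U n σ) ∧
    r = ∑ σ ∈ t, ⨆ x ∈ dynSet T C.U n σ, Real.exp (birkhoff T g n x)}

/-- The local classical topological pressure of an open cover. -/
noncomputable def covLocPress [TopologicalSpace X] (T : X → X) (g : X → ℝ)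
    (C : FinOpenCover X) : ℝ :=
  Filter.atTop.limsup fun n : ℕ => Real.log (covPressStat T g C n) / (n : ℝ)

/-- The classical topological pressure `P_top(T,g)` via open covers. -/
noncomputable def topPress [TopologicalSpace X] (T : X → X) (g : X → ℝ) : EReal :=
  ⨆ C : FinOpenCover X, ((covLocPress T g C : ℝ) : EReal)

/-! ### Topological tail pressure -/

/-- `P̃_n(T,g,Φ|Ψ) = sup_{a ∈ D(Ψ₀ⁿ⁻¹)} Σ_ψ a_ψ Σ_φ sup_{supp ψ} (φ e^{S_n g})`. -/
noncomputable def tailPressStat [TopologicalSpace X] (T : X → X) (g : X → ℝ)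
    (Φ Ψ : PartUnity X) (n : ℕ) : ℝ :=
  sSup {r | ∃ a ∈ weights (PartUnity.dyn T Ψ n),
    r = ∑ j, a j * ∑ i, ⨆ x ∈ tsupport ((PartUnity.dyn T Ψ n).f j),
      (PartUnity.dyn T Φ n).f i x * Real.exp (birkhoff T g n x)}

/-- The local topological tail pressure `P̃(T,g,Φ|Ψ) = limsup_n (1/n) log P̃_n(T,g,Φ|Ψ)`. -/
noncomputable def tailLocPress [TopologicalSpace X] (T : X → X) (g : X → ℝ)
    (Φ Ψ : PartUnity X) : ℝ :=
  Filter.atTop.limsup fun n : ℕ => Real.log (tailPressStat T g Φ Ψ n) / (n : ℝ)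

/-- The conditional topological pressure `P̃(T,g|Ψ) = sup_Φ P̃(T,g,Φ|Ψ)` over continuous `Φ`. -/
noncomputable def condTopPressPU [TopologicalSpace X] (T : X → X) (g : X → ℝ)
    (Ψ : PartUnity X) : EReal :=
  ⨆ Φ : {Φ : PartUnity X // Φ.Cont}, ((tailLocPress T g Φ.1 Ψ : ℝ) : EReal)

/-- The topological tail pressure `P̃*(T,g) = inf_Ψ P̃(T,g|Ψ)` over continuous `Ψ`. -/
noncomputable def puTailPress [TopologicalSpace X] (T : X → X) (g : X → ℝ) : EReal :=
  ⨅ Ψ : {Ψ : PartUnity X // Ψ.Cont}, condTopPressPU T g Ψ.1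

/-! ### Classical topological tail pressure (Li–Chen–Cheng) -/

/-- The Bowen ball `B(x,ε,n) = {y : d(Tⁱx,Tⁱy) < ε for all 0 ≤ i < n}`. -/
def bowenBall [PseudoMetricSpace X] (T : X → X) (x : X) (ε : ℝ) (n : ℕ) : Set X :=
  {y | ∀ i < n, dist (T^[i] x) (T^[i] y) < ε}

/-- `E` is `(n,δ)`-separated: distinct points `y,z ∈ E` satisfy `d(Tⁱy,Tⁱz) > δ`
for some `0 ≤ i < n`. -/
def IsSep [PseudoMetricSpace X] (T : X → X) (n : ℕ) (δ : ℝ) (E : Finset X) : Prop :=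
  ∀ y ∈ E, ∀ z ∈ E, y ≠ z → ∃ i < n, δ < dist (T^[i] y) (T^[i] z)

/-- `P_n(T,g,δ,ε) = sup_x sup { Σ_{y∈E} e^{S_n g(y)} : E (n,δ)-separated ⊆ B(x,ε,n) }`. -/
noncomputable def sepPress [PseudoMetricSpace X] (T : X → X) (g : X → ℝ)
    (n : ℕ) (δ ε : ℝ) : ℝ :=
  ⨆ x : X, sSup {r | ∃ E : Finset X, ↑E ⊆ bowenBall T x ε n ∧ IsSep T n δ E ∧
    r = ∑ y ∈ E, Real.exp (birkhoff T g n y)}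

/-- The classical topological tail pressure
`P*(T,g) = lim_{ε→0} lim_{δ→0} limsup_n (1/n) log P_n(T,g,δ,ε)`
(the inner limits are monotone, hence given by `inf_ε sup_δ`). -/
noncomputable def tailPress [PseudoMetricSpace X] (T : X → X) (g : X → ℝ) : EReal :=
  ⨅ ε : {ε : ℝ // 0 < ε}, ⨆ δ : {δ : ℝ // 0 < δ},
    Filter.atTop.limsup fun n : ℕ => ((Real.log (sepPress T g n δ.1 ε.1) / (n : ℝ) : ℝ) : EReal)

/-! Mixing a continuous partition of unity `Φ = (φᵢ)_{i<k}` with the uniform one,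
`φᵢᵗ = (1 - t) φᵢ + t / k`, gives a positive continuous partition `Φᵗ`. Now `Φᵗ = M Φ` for a
doubly stochastic matrix `M` whose columns have entropy at most `c(t)`, with `c(t) → 0` as
`t → 0`. Pointwise subadditivity of `-x log x` bounds `μ(ψ log ψ)` for `ψ ∈ Φᵗ`, and Jensen's
inequality bounds `-μ(ψ) log μ(ψ)`; together they give `H̃_μ(Φ) ≤ H̃_μ(Φᵗ) + c(t)`. Such
mixings are compatible with pullbacks and joins, with additive cost, so `(Φᵗ)₀ⁿ⁻¹` mixes `Φ₀ⁿ⁻¹`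
at cost `n c(t)`, and hence `h̃_μ(T,Φ) ≤ h̃_μ(T,Φᵗ) + c(t)`. -/

open Real Topology

lemma Real.negMulLog_sum_le_sum_negMulLog {ι : Type*} (s : Finset ι) {z : ι → ℝ}
    (hz : ∀ i ∈ s, 0 ≤ z i) : negMulLog (∑ i ∈ s, z i) ≤ ∑ i ∈ s, negMulLog (z i) := by
  simp only [negMulLog, neg_mul, Finset.sum_mul, ← Finset.sum_neg_distrib]
  refine Finset.sum_le_sum fun i hi => neg_le_neg ?_
  rcases (hz i hi).eq_or_lt with h | h
  · simp [← h]
  · exact mul_le_mul_of_nonneg_left (log_le_log h (Finset.single_le_sum hz hi)) h.le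

lemma Real.sum_negMulLog_le_log_card {ι : Type*} [Fintype ι] {c : ι → ℝ} (hc : ∀ i, 0 ≤ c i)
    (hc1 : ∑ i, c i = 1) : ∑ i, negMulLog (c i) ≤ log (Fintype.card ι) := by
  set k : ℝ := (Fintype.card ι : ℝ)
  have hk : 0 < k := by
    rcases isEmpty_or_nonempty ι with _ | _
    · simp at hc1
    · exact Nat.cast_pos.2 Fintype.card_pos
  have jensen := concaveOn_negMulLog.le_map_sum (t := Finset.univ) (w := fun _ => k⁻¹) (p := c)
    (fun _ _ => by positivity) (by simp [k, hk.ne']) (fun i _ => hc i)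
  have h_inv : negMulLog k⁻¹ = k⁻¹ * log k := by simp [negMulLog, log_inv]
  simp only [smul_eq_mul, ← Finset.mul_sum, hc1, mul_one, h_inv] at jensen
  exact le_of_mul_le_mul_left jensen (inv_pos.2 hk)

lemma Filter.limsup_le_limsup_add {ι : Type*} {l : Filter ι} {u v : ι → ℝ} {a : ℝ}
    (h : ∀ᶠ n in l, u n ≤ v n + a) (hu : l.IsCoboundedUnder (· ≤ ·) u)
    (hv : l.IsBoundedUnder (· ≤ ·) v) : l.limsup u ≤ l.limsup v + a := by
  refine le_of_forall_pos_le_add fun ε hε => limsup_le_of_le hu ?_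
  filter_upwards [eventually_lt_of_limsup_lt (lt_add_of_pos_right _ hε) hv, h] with n hv' hu'
  linarith

namespace PartUnity

structure Mixing (Ψ Φ : PartUnity X) (h : ℝ) where
  M : Fin Ψ.n → Fin Φ.n → ℝ
  nonneg : ∀ i j, 0 ≤ M i j
  sum_row : ∀ i, ∑ j, M i j = 1
  sum_col : ∀ j, ∑ i, M i j = 1
  sum_negMulLog_col_le : ∀ j, ∑ i, negMulLog (M i j) ≤ h
  f_eq : ∀ i x, Ψ.f i x = ∑ j, M i j * Φ.f j x

variable {Ψ Φ Ψ' Φ' : PartUnity X} {h h' : ℝ}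

lemma sum_join {M : Type*} [AddCommMonoid M] (Φ Ψ : PartUnity X) (g : Fin (Φ.join Ψ).n → M) :
    ∑ k, g k = ∑ i, ∑ j, g (finProdFinEquiv (i, j)) :=
  (finProdFinEquiv.sum_comp g).symm.trans (Fintype.sum_prod_type _)

@[simp]
lemma join_f_finProdFinEquiv (Φ Ψ : PartUnity X) (i : Fin Φ.n) (j : Fin Ψ.n) (x : X) :
    (Φ.join Ψ).f (finProdFinEquiv (i, j)) x = Φ.f i x * Ψ.f j x := by
  simp [join]

lemma dyn_n (T : X → X) (Φ : PartUnity X) : ∀ n, (dyn T Φ n).n = Φ.n ^ n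
  | 0 => rfl
  | n + 1 => by
    rw [pow_succ', ← dyn_n T Φ n]
    rfl

lemma n_pos (Φ : PartUnity X) (x : X) : 0 < Φ.n := by
  obtain ⟨i, -, -⟩ := Finset.exists_ne_zero_of_sum_ne_zero ((Φ.sum_one x).symm ▸ one_ne_zero)
  exact i.pos

lemma Cont.meas [TopologicalSpace X] [MeasurableSpace X] [OpensMeasurableSpace X]
    (hΦ : Φ.Cont) : Φ.Meas :=
  fun i => (hΦ i).measurable

section Measurable

variable [MeasurableSpace X] [MeasurableSpace Y]

lemma Meas.join (hΦ : Φ.Meas) (hΨ : Ψ.Meas) : (Φ.join Ψ).Meas :=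
  fun _ => (hΦ _).mul (hΨ _)

lemma Meas.comp (hΦ : Φ.Meas) {T : Y → X} (hT : Measurable T) : (Φ.comp T).Meas :=
  fun i => (hΦ i).comp hT

lemma Meas.dyn (hΦ : Φ.Meas) {T : X → X} (hT : Measurable T) : ∀ n, (dyn T Φ n).Meas
  | 0 => fun _ => measurable_const
  | n + 1 => hΦ.join ((hΦ.dyn hT n).comp hT)

lemma Mixing.meas (m : Ψ.Mixing Φ h) (hΦ : Φ.Meas) : Ψ.Meas := fun i => by
  rw [funext (m.f_eq i)]
  exact Finset.measurable_fun_sum _ fun j _ => (hΦ j).const_mul _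

end Measurable

def Mixing.mono (m : Ψ.Mixing Φ h) (hh : h ≤ h') : Ψ.Mixing Φ h' where
  __ := m
  sum_negMulLog_col_le j := (m.sum_negMulLog_col_le j).trans hh

def Mixing.refl (Φ : PartUnity X) : Φ.Mixing Φ 0 where
  M i j := if i = j then 1 else 0
  nonneg i j := by split_ifs <;> norm_num
  sum_row i := by simp
  sum_col j := by simp
  sum_negMulLog_col_le j := by simp [apply_ite]
  f_eq i x := by simp

def Mixing.comp (m : Ψ.Mixing Φ h) (T : Y → X) : (Ψ.comp T).Mixing (Φ.comp T) h where
  __ := m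
  f_eq i y := m.f_eq i (T y)

def Mixing.join (m : Ψ.Mixing Φ h) (m' : Ψ'.Mixing Φ' h') :
    (Ψ.join Ψ').Mixing (Φ.join Φ') (h + h') where
  M p q := m.M (finProdFinEquiv.symm p).1 (finProdFinEquiv.symm q).1 *
    m'.M (finProdFinEquiv.symm p).2 (finProdFinEquiv.symm q).2
  nonneg _ _ := mul_nonneg (m.nonneg _ _) (m'.nonneg _ _)
  sum_row p := by
    rw [sum_join]
    simp [← Finset.sum_mul_sum, m.sum_row, m'.sum_row]
  sum_col q := by
    rw [sum_join]
    simp [← Finset.sum_mul_sum, m.sum_col, m'.sum_col]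
  sum_negMulLog_col_le q := by
    rw [sum_join]
    simp only [Equiv.symm_apply_apply, negMulLog_mul, Finset.sum_add_distrib, ← Finset.sum_mul,
      ← Finset.mul_sum, m.sum_col, m'.sum_col, one_mul]
    linarith [m.sum_negMulLog_col_le (finProdFinEquiv.symm q).1,
      m'.sum_negMulLog_col_le (finProdFinEquiv.symm q).2]
  f_eq p x := by
    obtain ⟨⟨i, i'⟩, rfl⟩ := finProdFinEquiv.surjective p
    rw [join_f_finProdFinEquiv, m.f_eq, m'.f_eq, Finset.sum_mul_sum, sum_join]
    simp only [Equiv.symm_apply_apply, join_f_finProdFinEquiv]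
    exact Finset.sum_congr rfl fun j _ => Finset.sum_congr rfl fun j' _ => by ring

def Mixing.dyn (m : Ψ.Mixing Φ h) (T : X → X) :
    ∀ n : ℕ, (dyn T Ψ n).Mixing (dyn T Φ n) (n * h)
  | 0 => (Mixing.refl _).mono (by simp)
  | n + 1 => (m.join ((m.dyn T n).comp T)).mono (by push_cast; linarith)

end PartUnity

section Entropy

variable [MeasurableSpace X] {μ : Measure X}

namespace PartUnity

variable {Φ : PartUnity X}

lemma Meas.integrable [IsFiniteMeasure μ] (hΦ : Φ.Meas) (i : Fin Φ.n) :
    Integrable (Φ.f i) μ :=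
  .of_bound (hΦ i).aestronglyMeasurable 1 <| .of_forall fun x => by
    rw [Real.norm_of_nonneg (Φ.nonneg i x)]
    exact Φ.le_one i x

lemma Meas.integrable_negMulLog [IsFiniteMeasure μ] (hΦ : Φ.Meas) (i : Fin Φ.n) :
    Integrable (fun x => negMulLog (Φ.f i x)) μ := by
  refine .of_bound (continuous_negMulLog.measurable.comp (hΦ i)).aestronglyMeasurable 1
    (.of_forall fun x => ?_)
  rw [Real.norm_of_nonneg (negMulLog_nonneg (Φ.nonneg i x) (Φ.le_one i x))]
  linarith [negMulLog_le_one_sub_self (Φ.nonneg i x), Φ.nonneg i x]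

lemma Meas.sum_integral [IsProbabilityMeasure μ] (hΦ : Φ.Meas) :
    ∑ i, ∫ x, Φ.f i x ∂μ = 1 := by
  rw [← integral_finsetSum _ fun i _ => hΦ.integrable i]
  simp [Φ.sum_one]

end PartUnity

lemma statEnt_eq_sum (μ : Measure X) (Φ : PartUnity X) :
    statEnt μ Φ = ∑ i, (negMulLog (∫ x, Φ.f i x ∂μ) - ∫ x, negMulLog (Φ.f i x) ∂μ) := by
  simp [statEnt, negMulLog, integral_neg, sub_eq_add_neg]

lemma statEnt_nonneg [IsProbabilityMeasure μ] {Φ : PartUnity X} (hΦ : Φ.Meas) :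
    0 ≤ statEnt μ Φ := by
  rw [statEnt_eq_sum]
  refine Finset.sum_nonneg fun i _ => sub_nonneg.2 ?_
  exact concaveOn_negMulLog.le_map_integral continuous_negMulLog.continuousOn isClosed_Ici
    (.of_forall fun x => Φ.nonneg i x) (hΦ.integrable i) (hΦ.integrable_negMulLog i)

lemma statEnt_le_log [IsProbabilityMeasure μ] {Φ : PartUnity X} (hΦ : Φ.Meas) :
    statEnt μ Φ ≤ log Φ.n := by
  rw [statEnt_eq_sum]
  calc _ ≤ ∑ i, negMulLog (∫ x, Φ.f i x ∂μ) :=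
        Finset.sum_le_sum fun i _ => sub_le_self _ <|
          integral_nonneg fun x => negMulLog_nonneg (Φ.nonneg i x) (Φ.le_one i x)
    _ ≤ log Φ.n := by
        simpa using sum_negMulLog_le_log_card (fun i => integral_nonneg (Φ.nonneg i))
          hΦ.sum_integral

namespace PartUnity

variable [IsProbabilityMeasure μ] {Ψ Φ : PartUnity X} {h : ℝ}

lemma Mixing.le_statEnt_term (m : Ψ.Mixing Φ h) (hΦ : Φ.Meas) (i : Fin Ψ.n) :
    ∑ j, m.M i j * (negMulLog (∫ x, Φ.f j x ∂μ) - ∫ x, negMulLog (Φ.f j x) ∂μ)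
      - ∑ j, (∫ x, Φ.f j x ∂μ) * negMulLog (m.M i j)
      ≤ negMulLog (∫ x, Ψ.f i x ∂μ) - ∫ x, negMulLog (Ψ.f i x) ∂μ := by
  have h_int : ∫ x, Ψ.f i x ∂μ = ∑ j, m.M i j * ∫ x, Φ.f j x ∂μ := by
    simp_rw [m.f_eq i]
    rw [integral_finsetSum _ fun j _ => (hΦ.integrable j).const_mul _]
    simp_rw [integral_const_mul]
  have h_jensen : ∑ j, m.M i j * negMulLog (∫ x, Φ.f j x ∂μ)
      ≤ negMulLog (∫ x, Ψ.f i x ∂μ) := by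
    rw [h_int]
    simpa using concaveOn_negMulLog.le_map_sum (fun j _ => m.nonneg i j) (m.sum_row i)
      fun j _ => mem_Ici.2 (integral_nonneg (Φ.nonneg j))
  have h_pointwise : ∀ x, negMulLog (Ψ.f i x)
      ≤ ∑ j, (Φ.f j x * negMulLog (m.M i j) + m.M i j * negMulLog (Φ.f j x)) := fun x => by
    rw [m.f_eq i x]
    simpa only [negMulLog_mul] using negMulLog_sum_le_sum_negMulLog Finset.univ
      fun j _ => mul_nonneg (m.nonneg i j) (Φ.nonneg j x)
  have h_integrand : ∀ j, Integrable
      (fun x => Φ.f j x * negMulLog (m.M i j) + m.M i j * negMulLog (Φ.f j x)) μ := fun j =>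
    ((hΦ.integrable j).mul_const _).add ((hΦ.integrable_negMulLog j).const_mul _)
  have h_integrated : ∫ x, negMulLog (Ψ.f i x) ∂μ ≤ ∑ j, ((∫ x, Φ.f j x ∂μ) *
      negMulLog (m.M i j) + m.M i j * ∫ x, negMulLog (Φ.f j x) ∂μ) := by
    calc _ ≤ ∫ x, ∑ j, (Φ.f j x * negMulLog (m.M i j) + m.M i j * negMulLog (Φ.f j x)) ∂μ :=
          integral_mono ((m.meas hΦ).integrable_negMulLog i)
            (integrable_finsetSum _ fun j _ => h_integrand j) h_pointwise
      _ = _ := by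
          rw [integral_finsetSum _ fun j _ => h_integrand j]
          refine Finset.sum_congr rfl fun j _ => ?_
          rw [integral_add ((hΦ.integrable j).mul_const _)
            ((hΦ.integrable_negMulLog j).const_mul _), integral_mul_const, integral_const_mul]
  simp only [mul_sub, Finset.sum_sub_distrib, Finset.sum_add_distrib] at h_integrated ⊢
  linarith

theorem Mixing.statEnt_le_add (m : Ψ.Mixing Φ h) (hΦ : Φ.Meas) :
    statEnt μ Φ ≤ statEnt μ Ψ + h := by
  have h_rows := Finset.sum_le_sum fun i (_ : i ∈ Finset.univ) =>
    m.le_statEnt_term (μ := μ) hΦ i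
  rw [← statEnt_eq_sum, Finset.sum_sub_distrib] at h_rows
  have h_main : ∑ i, ∑ j, m.M i j * (negMulLog (∫ x, Φ.f j x ∂μ) - ∫ x, negMulLog (Φ.f j x) ∂μ)
      = statEnt μ Φ := by
    simp [Finset.sum_comm (γ := Fin Ψ.n), ← Finset.sum_mul, m.sum_col, statEnt_eq_sum]
  have h_cost : ∑ i, ∑ j, (∫ x, Φ.f j x ∂μ) * negMulLog (m.M i j) ≤ h := by
    calc _ = ∑ j, (∫ x, Φ.f j x ∂μ) * ∑ i, negMulLog (m.M i j) := by
          simp [Finset.sum_comm (γ := Fin Ψ.n), Finset.mul_sum]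
      _ ≤ ∑ j, (∫ x, Φ.f j x ∂μ) * h := Finset.sum_le_sum fun j _ =>
          mul_le_mul_of_nonneg_left (m.sum_negMulLog_col_le j) (integral_nonneg (Φ.nonneg j))
      _ = h := by rw [← Finset.sum_mul, hΦ.sum_integral, one_mul]
  linarith

theorem Mixing.locEnt_le_add {T : X → X} (hT : Measurable T) (m : Ψ.Mixing Φ h)
    (hΦ : Φ.Meas) : locEnt T μ Φ ≤ locEnt T μ Ψ + h := by
  refine limsup_le_limsup_add ?_ ?_ ?_
  · filter_upwards [eventually_gt_atTop 0] with n hn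
    have hn' : (0 : ℝ) < n := Nat.cast_pos.2 hn
    have := (m.dyn T n).statEnt_le_add (μ := μ) (hΦ.dyn hT n)
    rw [div_add' _ _ _ hn'.ne', div_le_div_iff_of_pos_right hn']
    linarith
  · exact isCoboundedUnder_le_of_le atTop fun n =>
      div_nonneg (statEnt_nonneg (hΦ.dyn hT n)) n.cast_nonneg
  · refine isBoundedUnder_of_eventually_le (a := log Ψ.n) ?_
    filter_upwards [eventually_gt_atTop 0] with n hn
    have := statEnt_le_log (μ := μ) ((m.meas hΦ).dyn hT n)
    rw [dyn_n, Nat.cast_pow, log_pow] at this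
    rw [div_le_iff₀ (Nat.cast_pos.2 hn)]
    linarith

end PartUnity

end Entropy

namespace PartUnity

noncomputable def mixUniform (Φ : PartUnity X) (t : ℝ) (ht0 : 0 ≤ t) (ht1 : t ≤ 1) :
    PartUnity X where
  n := Φ.n
  f i x := (1 - t) * Φ.f i x + t / Φ.n
  nonneg i x := add_nonneg (mul_nonneg (sub_nonneg.2 ht1) (Φ.nonneg i x)) (by positivity)
  le_one i x := by
    have h_div : t / Φ.n ≤ t := div_le_self ht0 (Nat.one_le_cast.2 i.pos)
    nlinarith [Φ.le_one i x]
  sum_one x := by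
    have hn : (Φ.n : ℝ) ≠ 0 := Nat.cast_ne_zero.2 (Φ.n_pos x).ne'
    simp [Finset.sum_add_distrib, ← Finset.mul_sum, Φ.sum_one x, mul_div_cancel₀ _ hn]

lemma Cont.mixUniform [TopologicalSpace X] {Φ : PartUnity X} (hΦ : Φ.Cont) {t : ℝ}
    {ht0 : 0 ≤ t} {ht1 : t ≤ 1} : (Φ.mixUniform t ht0 ht1).Cont :=
  fun i => (continuous_const.mul (hΦ i)).add continuous_const

lemma mixUniform_pos {Φ : PartUnity X} {t : ℝ} (ht : 0 < t) {ht0 : 0 ≤ t} {ht1 : t ≤ 1} :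
    (Φ.mixUniform t ht0 ht1).Pos := fun i x =>
  add_pos_of_nonneg_of_pos (mul_nonneg (sub_nonneg.2 ht1) (Φ.nonneg i x))
    (div_pos ht (Nat.cast_pos.2 i.pos))

noncomputable def mixUniformCost (k : ℕ) (t : ℝ) : ℝ :=
  negMulLog (1 - t + t / k) + k * negMulLog (t / k)

lemma tendsto_mixUniformCost (k : ℕ) : Tendsto (mixUniformCost k) (𝓝 0) (𝓝 0) := by
  have h_cont : Continuous (mixUniformCost k) := by
    unfold mixUniformCost
    fun_prop
  simpa [mixUniformCost] using h_cont.tendsto 0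

-- Indices are typed by `Fin Φ.n`, not `Fin (Φ.mixUniform ..).n`, so that `simp` can sum the `if`.
noncomputable def mixingUniform (Φ : PartUnity X) (t : ℝ) (ht0 : 0 ≤ t) (ht1 : t ≤ 1) :
    (Φ.mixUniform t ht0 ht1).Mixing Φ (mixUniformCost Φ.n t) where
  M := fun i j : Fin Φ.n => (1 - t) * (if i = j then 1 else 0) + t / Φ.n
  nonneg i j := add_nonneg (mul_nonneg (sub_nonneg.2 ht1) (by split_ifs <;> norm_num))
    (by positivity)
  sum_row (i : Fin Φ.n) := by
    have hn : (Φ.n : ℝ) ≠ 0 := Nat.cast_ne_zero.2 i.pos.ne'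
    simp [Finset.sum_add_distrib, mul_div_cancel₀ _ hn]
  sum_col j := by
    show ∑ i : Fin Φ.n, ((1 - t) * (if i = j then 1 else 0) + t / Φ.n) = 1
    have hn : (Φ.n : ℝ) ≠ 0 := Nat.cast_ne_zero.2 j.pos.ne'
    simp [Finset.sum_add_distrib, mul_div_cancel₀ _ hn]
  sum_negMulLog_col_le j := by
    show ∑ i : Fin Φ.n, negMulLog ((1 - t) * (if i = j then 1 else 0) + t / Φ.n) ≤ _
    have h_term : ∀ i : Fin Φ.n, negMulLog ((1 - t) * (if i = j then 1 else 0) + t / Φ.n)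
        ≤ (if i = j then negMulLog (1 - t + t / Φ.n) else 0) + negMulLog (t / Φ.n) := by
      intro i
      have h_div : t / Φ.n ≤ 1 := (div_le_self ht0 (Nat.one_le_cast.2 i.pos)).trans ht1
      split_ifs
      · simpa using negMulLog_nonneg (by positivity) h_div
      · simp
    refine (Finset.sum_le_sum fun i _ => h_term i).trans_eq ?_
    simp [Finset.sum_add_distrib, mixUniformCost]
  f_eq (i : Fin Φ.n) x := by
    simp [add_mul, Finset.sum_add_distrib, ← Finset.mul_sum, Φ.sum_one x, mixUniform]

theorem Cont.exists_pos_locEnt_le_add [TopologicalSpace X] [MeasurableSpace X]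
    [OpensMeasurableSpace X] {μ : Measure X} [IsProbabilityMeasure μ] {T : X → X}
    (hT : Measurable T) {Φ : PartUnity X} (hΦ : Φ.Cont) {ε : ℝ} (hε : 0 < ε) :
    ∃ Ψ : PartUnity X, Ψ.Cont ∧ Ψ.Pos ∧ locEnt T μ Φ ≤ locEnt T μ Ψ + ε := by
  have h_small : ∀ᶠ t in 𝓝[>] (0 : ℝ), (mixUniformCost Φ.n t < ε ∧ t ≤ 1) ∧ t ∈ Ioi 0 :=
    ((((tendsto_mixUniformCost Φ.n).eventually (gt_mem_nhds hε)).and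
      (eventually_le_nhds one_pos)).filter_mono nhdsWithin_le_nhds).and eventually_mem_nhdsWithin
  obtain ⟨t, ⟨h_cost, ht1⟩, ht0⟩ := h_small.exists
  refine ⟨Φ.mixUniform t ht0.le ht1, hΦ.mixUniform, mixUniform_pos ht0, ?_⟩
  have := (mixingUniform Φ t ht0.le ht1).locEnt_le_add (μ := μ) hT hΦ.meas
  linarith

end PartUnity

theorem metEnt_eq_iSup_pos_general {X : Type*} [MetricSpace X]
    [MeasurableSpace X] [BorelSpace X]
    (T : X → X) (hT : Continuous T)
    (μ : Measure X) [IsProbabilityMeasure μ] :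
    metEnt T μ =
      ⨆ Φ : {Φ : PartUnity X // Φ.Cont ∧ Φ.Pos}, ((locEnt T μ Φ.1 : ℝ) : EReal) := by
  refine le_antisymm (iSup_le fun ⟨Φ, hΦ⟩ => ?_)
    (iSup_le fun ⟨Φ, hΦ, _⟩ => le_iSup_of_le (⟨Φ, hΦ⟩ : {Φ : PartUnity X // Φ.Cont}) le_rfl)
  refine EReal.ge_of_forall_gt_iff_ge.1 fun z hz => ?_
  obtain ⟨Ψ, hΨ_cont, hΨ_pos, hle⟩ := hΦ.exists_pos_locEnt_le_add (μ := μ) hT.measurable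
    (sub_pos.2 (EReal.coe_lt_coe_iff.1 hz))
  exact le_iSup_of_le (⟨Ψ, hΨ_cont, hΨ_pos⟩ : {Φ : PartUnity X // Φ.Cont ∧ Φ.Pos})
    (EReal.coe_le_coe_iff.2 (by linarith))

/-- `h̃_μ(T)` equals the supremum of `h̃_μ(T,Φ)` over *positive*
continuous partitions of unity. -/
theorem metEnt_eq_iSup_pos {X : Type*} [MetricSpace X] [CompactSpace X] [Nonempty X]
    [MeasurableSpace X] [BorelSpace X]
    (T : X → X) (hT : Continuous T) (hTsurj : Function.Surjective T)
    (μ : Measure X) [IsProbabilityMeasure μ] (hμ : MeasurePreserving T μ μ) :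
    metEnt T μ =
      ⨆ Φ : {Φ : PartUnity X // Φ.Cont ∧ Φ.Pos}, ((locEnt T μ Φ.1 : ℝ) : EReal) :=
  metEnt_eq_iSup_pos_general T hT μ
end

section
/- For any continuous surjective self-map T of a compact metric space X, h̃*(T) ≤ h*(T): the topological tail entropy defined via continuous partitions of unity is at most Misiurewicz's topological tail entropy. -/
open MeasureTheory Filter Set

/-! ### Metric entropy via partitions of unity -/

variable {X Y : Type*}

/-!
Given a finite open cover `𝒱`, take a continuous partition of unity `Ψ` subordinate to it, so that
every member of `Ψ₀ⁿ⁻¹` is supported in a member of `𝒱₀ⁿ⁻¹`. Given a continuous `Φ` and `c > 1`,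
uniform continuity yields `δ > 0` with `Σ_φ sup_S φ ≤ c` whenever `diam S < δ`; since the join is
submultiplicative for these sums, `Σ_{φ ∈ Φ₀ⁿ⁻¹} sup_S φ ≤ cⁿ` whenever every `Tⁱ S` (`i < n`) has
diameter `< δ`. For a cover `𝒰` by sets of diameter `< δ`, covering each `V ∈ 𝒱₀ⁿ⁻¹` by
`N(𝒰₀ⁿ⁻¹|V)` members of `𝒰₀ⁿ⁻¹` gives `H̃_n(Φ|Ψ) ≤ max_V N(𝒰₀ⁿ⁻¹|V) · cⁿ`, hence
`h̃(Φ|Ψ) ≤ h(𝒰|𝒱) + log c`.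
-/

section BiSup

variable {X : Type*} {S : Set X} {f : X → ℝ}

lemma Real.biSup_le {a : ℝ} (ha : 0 ≤ a) (h : ∀ x ∈ S, f x ≤ a) : ⨆ x ∈ S, f x ≤ a :=
  Real.iSup_le (fun x => Real.iSup_le (h x) ha) ha

lemma Real.biSup_nonneg (h : ∀ x, 0 ≤ f x) : 0 ≤ ⨆ x ∈ S, f x :=
  Real.iSup_nonneg fun x => Real.iSup_nonneg fun _ => h x

lemma Real.le_biSup {b : ℝ} (hb : ∀ x, f x ≤ b) {x : X} (hx : x ∈ S) : f x ≤ ⨆ y ∈ S, f y :=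
  le_ciSup₂ (f := fun y (_ : y ∈ S) => f y) ⟨b, by simp [mem_upperBounds, hb]⟩ x hx

end BiSup

lemma limsup_log_div_le_of_le_mul_pow {u v : ℕ → ℝ} {c K : ℝ} (hc : 0 < c) (hu : ∀ n, 1 ≤ u n)
    (hv : ∀ n, 1 ≤ v n) (hvK : ∀ n, v n ≤ K ^ n) (huv : ∀ n, u n ≤ v n * c ^ n) :
    atTop.limsup (fun n : ℕ => Real.log (u n) / n) ≤
      atTop.limsup (fun n : ℕ => Real.log (v n) / n) + Real.log c := by
  have hlog_nonneg {w : ℕ → ℝ} (hw : ∀ n, 1 ≤ w n) n : 0 ≤ Real.log (w n) / n :=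
    div_nonneg (Real.log_nonneg (hw n)) n.cast_nonneg
  have hv_le : ∀ᶠ n : ℕ in atTop, Real.log (v n) / n ≤ Real.log K := by
    filter_upwards [eventually_gt_atTop 0] with n hn
    rw [div_le_iff₀ (by exact_mod_cast hn), mul_comm, ← Real.log_pow]
    exact Real.log_le_log (zero_lt_one.trans_le (hv n)) (hvK n)
  rw [← limsup_add_const _ _ _ (isBoundedUnder_of_eventually_le hv_le)
    (isCoboundedUnder_le_of_le _ (hlog_nonneg hv))]
  refine limsup_le_limsup ?_ (isCoboundedUnder_le_of_le _ (hlog_nonneg hu))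
    (isBoundedUnder_of_eventually_le (hv_le.mono fun n h => add_le_add_left h (Real.log c)))
  filter_upwards [eventually_gt_atTop 0] with n hn
  have hn' : (0 : ℝ) < n := by exact_mod_cast hn
  have := Real.log_le_log (zero_lt_one.trans_le (hu n)) (huv n)
  rw [Real.log_mul (by linarith [hv n]) (by positivity), Real.log_pow] at this
  rw [div_add' _ _ _ hn'.ne', div_le_div_iff_of_pos_right hn']
  linarith

lemma EReal.coe_le_iSup_coe_of_forall_pos {ι : Sort*} {f : ι → ℝ} {x : ℝ}
    (h : ∀ η > 0, ∃ i, x ≤ f i + η) : (x : EReal) ≤ ⨆ i, (f i : EReal) := by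
  by_contra! hlt
  obtain ⟨w, hw, hwx⟩ := EReal.lt_iff_exists_real_btwn.1 hlt
  obtain ⟨i, hi⟩ := h (x - w) (by exact_mod_cast sub_pos.2 hwx)
  have : (f i : EReal) < w := (le_iSup (fun i => (f i : EReal)) i).trans_lt hw
  linarith [EReal.coe_lt_coe_iff.1 this]

namespace PartUnity

variable {X Y : Type*}

/-- `condTopStatPU Φ ψ` unfolds to `Φ.supSum (tsupport ψ)`. -/
noncomputable def supSum (Φ : PartUnity X) (S : Set X) : ℝ := ∑ i, ⨆ x ∈ S, Φ.f i x

lemma supSum_nonneg (Φ : PartUnity X) (S : Set X) : 0 ≤ Φ.supSum S :=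
  Finset.sum_nonneg fun i _ => Real.biSup_nonneg (Φ.nonneg i)

lemma le_biSup (Φ : PartUnity X) (i : Fin Φ.n) {S : Set X} {x : X} (hx : x ∈ S) :
    Φ.f i x ≤ ⨆ y ∈ S, Φ.f i y :=
  Real.le_biSup (Φ.le_one i) hx

lemma supSum_mono (Φ : PartUnity X) {S S' : Set X} (h : S ⊆ S') : Φ.supSum S ≤ Φ.supSum S' :=
  Finset.sum_le_sum fun i _ =>
    Real.biSup_le (Real.biSup_nonneg (Φ.nonneg i)) fun _ hx => Φ.le_biSup i (h hx)

lemma supSum_le_card (Φ : PartUnity X) (S : Set X) : Φ.supSum S ≤ Φ.n := by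
  calc Φ.supSum S ≤ ∑ _i : Fin Φ.n, (1 : ℝ) :=
        Finset.sum_le_sum fun i _ => Real.biSup_le zero_le_one fun x _ => Φ.le_one i x
    _ = Φ.n := by simp

lemma one_le_supSum (Φ : PartUnity X) {S : Set X} {x : X} (hx : x ∈ S) : 1 ≤ Φ.supSum S := by
  calc (1 : ℝ) = ∑ i, Φ.f i x := (Φ.sum_one x).symm
    _ ≤ Φ.supSum S := Finset.sum_le_sum fun i _ => Φ.le_biSup i hx

lemma supSum_triv_le (S : Set X) : (triv X).supSum S ≤ 1 := by
  show ∑ _i : Fin 1, ⨆ x ∈ S, (1 : ℝ) ≤ 1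
  rw [Fin.sum_univ_one]
  exact Real.biSup_le zero_le_one fun _ _ => le_rfl

lemma supSum_join_le (Φ Ψ : PartUnity X) (S : Set X) :
    (Φ.join Ψ).supSum S ≤ Φ.supSum S * Ψ.supSum S := by
  show ∑ k : Fin (Φ.n * Ψ.n), ⨆ x ∈ S, (Φ.join Ψ).f k x ≤ _
  rw [← finProdFinEquiv.sum_comp, supSum, supSum, Finset.sum_mul_sum, ← Fintype.sum_prod_type']
  simp only [join, Equiv.symm_apply_apply]
  refine Finset.sum_le_sum fun p _ => Real.biSup_le (mul_nonneg (Real.biSup_nonneg (Φ.nonneg _))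
    (Real.biSup_nonneg (Ψ.nonneg _))) fun x hx => ?_
  exact mul_le_mul (Φ.le_biSup _ hx) (Ψ.le_biSup _ hx) (Ψ.nonneg _ x)
    (Real.biSup_nonneg (Φ.nonneg _))

lemma supSum_comp_le (Φ : PartUnity Y) (g : X → Y) (S : Set X) :
    (Φ.comp g).supSum S ≤ Φ.supSum (g '' S) :=
  Finset.sum_le_sum fun i _ => Real.biSup_le (Real.biSup_nonneg (Φ.nonneg i))
    fun _ hx => Φ.le_biSup i (mem_image_of_mem g hx)

lemma supSum_le_sum_inter (Φ : PartUnity X) {α : Type*} {A : Set X} {W : α → Set X}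
    {t : Finset α} (hA : A ⊆ ⋃ σ ∈ t, W σ) :
    Φ.supSum A ≤ ∑ σ ∈ t, Φ.supSum (A ∩ W σ) := by
  simp only [supSum]
  rw [Finset.sum_comm]
  refine Finset.sum_le_sum fun i _ => Real.biSup_le
    (Finset.sum_nonneg fun σ _ => Real.biSup_nonneg (Φ.nonneg i)) fun x hx => ?_
  obtain ⟨σ, hσt, hσ⟩ := mem_iUnion₂.1 (hA hx)
  exact (Φ.le_biSup i (show x ∈ A ∩ W σ from ⟨hx, hσ⟩)).trans (Finset.single_le_sum
    (f := fun σ => ⨆ y ∈ A ∩ W σ, Φ.f i y) (fun σ _ => Real.biSup_nonneg (Φ.nonneg i)) hσt)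

section Metric

variable [PseudoMetricSpace X]

lemma supSum_dyn_le_pow {T : X → X} {Φ : PartUnity X} {δ c : ℝ}
    (hΦ : ∀ S : Set X, (∀ x ∈ S, ∀ y ∈ S, dist x y < δ) → Φ.supSum S ≤ c) :
    ∀ (n : ℕ) (S : Set X), (∀ i < n, ∀ x ∈ S, ∀ y ∈ S, dist (T^[i] x) (T^[i] y) < δ) →
      (dyn T Φ n).supSum S ≤ c ^ n
  | 0, S, _ => (supSum_triv_le S).trans_eq (pow_zero c).symm
  | n + 1, S, hS => by
    have hΦS : Φ.supSum S ≤ c := hΦ S (hS 0 n.succ_pos)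
    have hTS : (dyn T Φ n).supSum (T '' S) ≤ c ^ n :=
      supSum_dyn_le_pow hΦ n (T '' S) <| by
        rintro i hi _ ⟨x, hx, rfl⟩ _ ⟨y, hy, rfl⟩
        exact hS (i + 1) (by omega) x hx y hy
    calc (dyn T Φ (n + 1)).supSum S
        ≤ Φ.supSum S * ((dyn T Φ n).comp T).supSum S := supSum_join_le _ _ S
      _ ≤ c * c ^ n := mul_le_mul hΦS ((supSum_comp_le _ T S).trans hTS) (supSum_nonneg _ S)
          ((Φ.supSum_nonneg S).trans hΦS)
      _ = c ^ (n + 1) := (pow_succ' c n).symm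

lemma exists_supSum_le_of_dist_lt [CompactSpace X] {Φ : PartUnity X} (hΦ : Φ.Cont) {c : ℝ}
    (hc : 1 < c) : ∃ δ > 0, ∀ S : Set X, (∀ x ∈ S, ∀ y ∈ S, dist x y < δ) → Φ.supSum S ≤ c := by
  set ε := (c - 1) / (Φ.n + 1)
  have hε : 0 < ε := div_pos (by linarith) (by positivity)
  have hεn : Φ.n * ε ≤ c - 1 := by
    rw [mul_div_assoc', div_le_iff₀ (by positivity)]
    nlinarith
  have hF : UniformContinuous fun x i => Φ.f i x :=
    CompactSpace.uniformContinuous_of_continuous (continuous_pi hΦ)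
  obtain ⟨δ, hδ, hFδ⟩ := Metric.uniformContinuous_iff.1 hF ε hε
  refine ⟨δ, hδ, fun S hS => ?_⟩
  rcases S.eq_empty_or_nonempty with rfl | ⟨x₀, hx₀⟩
  · exact (Finset.sum_nonpos fun i _ => Real.biSup_le le_rfl (by simp)).trans (by linarith)
  have hclose : ∀ i, ⨆ x ∈ S, Φ.f i x ≤ Φ.f i x₀ + ε := fun i =>
    Real.biSup_le (by linarith [Φ.nonneg i x₀]) fun x hx => by
      have := (dist_le_pi_dist _ _ i).trans_lt (hFδ (hS x hx x₀ hx₀))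
      rw [Real.dist_eq, abs_lt] at this
      linarith
  calc Φ.supSum S ≤ ∑ i, (Φ.f i x₀ + ε) := Finset.sum_le_sum fun i _ => hclose i
    _ = 1 + Φ.n * ε := by simp [Finset.sum_add_distrib, Φ.sum_one]
    _ ≤ c := by linarith

end Metric

end PartUnity

namespace FinOpenCover

lemma exists_dist_lt {X : Type*} [PseudoMetricSpace X] [CompactSpace X] {δ : ℝ} (hδ : 0 < δ) :
    ∃ C : FinOpenCover X, ∀ i, ∀ x ∈ C.U i, ∀ y ∈ C.U i, dist x y < δ := by
  obtain ⟨s, hs⟩ := isCompact_univ.elim_finite_subcover (fun c : X => Metric.ball c (δ / 2))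
    (fun _ => Metric.isOpen_ball) fun x _ => mem_iUnion.2 ⟨x, Metric.mem_ball_self (by linarith)⟩
  refine ⟨⟨s.card, fun i => Metric.ball (s.equivFin.symm i) (δ / 2), fun _ => Metric.isOpen_ball,
    eq_univ_of_forall fun x => ?_⟩, fun i x hx y hy => ?_⟩
  · obtain ⟨c, hc, hxc⟩ := mem_iUnion₂.1 (hs (mem_univ x))
    exact mem_iUnion.2 ⟨s.equivFin ⟨c, hc⟩, by simpa using hxc⟩
  · rw [Metric.mem_ball] at hx hy
    linarith [dist_triangle_right x y (s.equivFin.symm i : X)]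

variable {X : Type*} [TopologicalSpace X]

lemma exists_cont_partUnity_subordinate [NormalSpace X] [ParacompactSpace X]
    (C : FinOpenCover X) :
    ∃ Ψ : PartUnity X, Ψ.Cont ∧ ∀ j, ∃ i, tsupport (Ψ.f j) ⊆ C.U i := by
  obtain ⟨ρ, hρ⟩ := PartitionOfUnity.exists_isSubordinate isClosed_univ C.U C.opn C.cov.ge
  refine ⟨⟨C.n, fun i x => ρ i x, fun i x => ρ.nonneg i x, fun i x => ρ.le_one i x,
    fun x => ?_⟩, fun i => (ρ i).continuous, fun i => ⟨i, hρ i⟩⟩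
  simpa [finsum_eq_sum_of_fintype] using ρ.sum_eq_one (mem_univ x)

lemma exists_mem_dynSet (C : FinOpenCover X) (T : X → X) (n : ℕ) (x : X) :
    ∃ τ : Fin n → Fin C.n, x ∈ dynSet T C.U n τ := by
  have h i : ∃ m, T^[i] x ∈ C.U m := mem_iUnion.1 (C.cov ▸ mem_univ (T^[i] x))
  choose τ hτ using h
  exact ⟨fun i => τ i, mem_iInter.2 fun i => hτ i⟩

lemma subset_iUnion_dynSet (C : FinOpenCover X) (T : X → X) (n : ℕ) (S : Set X) :
    S ⊆ ⋃ σ : Fin n → Fin C.n, dynSet T C.U n σ :=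
  fun x _ => mem_iUnion.2 (C.exists_mem_dynSet T n x)

end FinOpenCover

section DynSet

variable {X : Type*}

lemma dynSet_cons (T : X → X) {m n : ℕ} (U : Fin m → Set X) (a : Fin m) (τ : Fin n → Fin m) :
    dynSet T U (n + 1) (Fin.cons a τ) = U a ∩ T ⁻¹' dynSet T U n τ := by
  ext x
  simp [dynSet, Fin.forall_fin_succ, Function.iterate_succ_apply]

lemma tsupport_dyn_subset_dynSet [TopologicalSpace X] {T : X → X} (hT : Continuous T)
    {Ψ : PartUnity X} {m : ℕ} {V : Fin m → Set X} (hΨ : ∀ j, ∃ i, tsupport (Ψ.f j) ⊆ V i) :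
    ∀ (n : ℕ) (j : Fin (PartUnity.dyn T Ψ n).n),
      ∃ τ : Fin n → Fin m, tsupport ((PartUnity.dyn T Ψ n).f j) ⊆ dynSet T V n τ
  | 0, _ => ⟨Fin.elim0, by simp [dynSet]⟩
  | n + 1, j => by
    obtain ⟨a, ha⟩ := hΨ (finProdFinEquiv.symm j).1
    obtain ⟨τ, hτ⟩ := tsupport_dyn_subset_dynSet hT hΨ n (finProdFinEquiv.symm j).2
    refine ⟨Fin.cons a τ, ?_⟩
    rw [dynSet_cons]
    exact subset_inter (tsupport_mul_subset_left.trans ha)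
      (tsupport_mul_subset_right.trans
        ((tsupport_comp_subset_preimage _ hT).trans (preimage_mono hτ)))

end DynSet

section CoverNum

variable {X α : Type*} [Fintype α] {V : α → Set X} {S : Set X}

lemma exists_card_eq_coverNum (h : S ⊆ ⋃ i, V i) :
    ∃ t : Finset α, t.card = coverNum V S ∧ S ⊆ ⋃ i ∈ t, V i :=
  Nat.sInf_mem (s := {k | ∃ t : Finset α, t.card = k ∧ S ⊆ ⋃ i ∈ t, V i})
    ⟨_, Finset.univ, rfl, by simpa using h⟩

lemma coverNum_le_card (h : S ⊆ ⋃ i, V i) : coverNum V S ≤ Fintype.card α :=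
  Nat.sInf_le ⟨Finset.univ, rfl, by simpa using h⟩

lemma one_le_coverNum (h : S ⊆ ⋃ i, V i) (hS : S.Nonempty) : 1 ≤ coverNum V S := by
  obtain ⟨t, ht, hcov⟩ := exists_card_eq_coverNum h
  obtain ⟨x, hx⟩ := hS
  obtain ⟨i, hi, -⟩ := mem_iUnion₂.1 (hcov hx)
  exact ht ▸ Finset.card_pos.2 ⟨i, hi⟩

lemma PartUnity.supSum_le_coverNum_mul (Φ : PartUnity X) (h : S ⊆ ⋃ i, V i) {c : ℝ}
    (hc : ∀ i, Φ.supSum (S ∩ V i) ≤ c) : Φ.supSum S ≤ coverNum V S * c := by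
  obtain ⟨t, ht, hcov⟩ := exists_card_eq_coverNum h
  calc Φ.supSum S ≤ ∑ i ∈ t, Φ.supSum (S ∩ V i) := Φ.supSum_le_sum_inter hcov
    _ ≤ ∑ _i ∈ t, c := Finset.sum_le_sum fun i _ => hc i
    _ = coverNum V S * c := by rw [Finset.sum_const, ht, nsmul_eq_mul]

end CoverNum

section MaxCondCoverNum

variable {X : Type*} [TopologicalSpace X] (T : X → X) (CU CV : FinOpenCover X)

noncomputable def maxCondCoverNum (n : ℕ) : ℕ :=
  ⨆ τ : Fin n → Fin CV.n, coverNum (fun σ : Fin n → Fin CU.n => dynSet T CU.U n σ)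
    (dynSet T CV.U n τ)

lemma misCondLoc_eq_limsup :
    misCondLoc T CU CV =
      atTop.limsup fun n : ℕ => Real.log (maxCondCoverNum T CU CV n) / (n : ℝ) := rfl

lemma coverNum_le_maxCondCoverNum {n : ℕ} (τ : Fin n → Fin CV.n) :
    coverNum (fun σ : Fin n → Fin CU.n => dynSet T CU.U n σ) (dynSet T CV.U n τ) ≤
      maxCondCoverNum T CU CV n :=
  le_ciSup (f := fun τ : Fin n → Fin CV.n =>
    coverNum (fun σ : Fin n → Fin CU.n => dynSet T CU.U n σ) (dynSet T CV.U n τ))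
    (Set.finite_range _).bddAbove τ

lemma one_le_maxCondCoverNum [Nonempty X] (n : ℕ) : 1 ≤ maxCondCoverNum T CU CV n := by
  obtain ⟨τ, hτ⟩ := CV.exists_mem_dynSet T n (Classical.arbitrary X)
  exact (one_le_coverNum (CU.subset_iUnion_dynSet T n _) ⟨_, hτ⟩).trans
    (coverNum_le_maxCondCoverNum T CU CV τ)

lemma maxCondCoverNum_le_pow (n : ℕ) : maxCondCoverNum T CU CV n ≤ CU.n ^ n :=
  ciSup_le' fun τ => by
    simpa using coverNum_le_card (CU.subset_iUnion_dynSet T n (dynSet T CV.U n τ))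

end MaxCondCoverNum

section CondTopStat

variable {X : Type*}

lemma nonneg_of_mem_weights {Ψ : PartUnity X} {a : Fin Ψ.n → ℝ} (ha : a ∈ weights Ψ) (j : Fin Ψ.n) :
    0 ≤ a j :=
  (Real.iInf_nonneg (Ψ.nonneg j)).trans (ha.1 j).1

lemma eval_mem_weights (Ψ : PartUnity X) (x : X) : (fun j => Ψ.f j x) ∈ weights Ψ :=
  ⟨fun j => ⟨ciInf_le ⟨0, forall_mem_range.2 (Ψ.nonneg j)⟩ x,
    le_ciSup ⟨1, forall_mem_range.2 (Ψ.le_one j)⟩ x⟩, Ψ.sum_one x⟩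

variable [TopologicalSpace X]

noncomputable def condTopStat (Φ Ψ : PartUnity X) : ℝ :=
  sSup {r | ∃ a ∈ weights Ψ, r = ∑ j, a j * condTopStatPU Φ (Ψ.f j)}

lemma tailStat_eq_condTopStat (T : X → X) (Φ Ψ : PartUnity X) (n : ℕ) :
    tailStat T Φ Ψ n = condTopStat (PartUnity.dyn T Φ n) (PartUnity.dyn T Ψ n) := rfl

lemma sum_mul_le_of_mem_weights {Φ Ψ : PartUnity X} {a : Fin Ψ.n → ℝ} (ha : a ∈ weights Ψ) {B : ℝ}
    (hB : ∀ j, condTopStatPU Φ (Ψ.f j) ≤ B) : ∑ j, a j * condTopStatPU Φ (Ψ.f j) ≤ B :=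
  calc ∑ j, a j * condTopStatPU Φ (Ψ.f j) ≤ ∑ j, a j * B :=
        Finset.sum_le_sum fun j _ => mul_le_mul_of_nonneg_left (hB j) (nonneg_of_mem_weights ha j)
    _ = B := by rw [← Finset.sum_mul, ha.2, one_mul]

lemma condTopStat_le {Φ Ψ : PartUnity X} {B : ℝ} (hB₀ : 0 ≤ B)
    (hB : ∀ j, condTopStatPU Φ (Ψ.f j) ≤ B) : condTopStat Φ Ψ ≤ B :=
  Real.sSup_le (by rintro _ ⟨a, ha, rfl⟩; exact sum_mul_le_of_mem_weights ha hB) hB₀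

lemma one_le_condTopStat [Nonempty X] (Φ Ψ : PartUnity X) : 1 ≤ condTopStat Φ Ψ := by
  obtain ⟨x⟩ := ‹Nonempty X›
  have hbdd : BddAbove {r | ∃ a ∈ weights Ψ, r = ∑ j, a j * condTopStatPU Φ (Ψ.f j)} :=
    ⟨Φ.n, by rintro _ ⟨a, ha, rfl⟩; exact sum_mul_le_of_mem_weights ha fun j => Φ.supSum_le_card _⟩
  refine le_csSup_of_le hbdd ⟨_, eval_mem_weights Ψ x, rfl⟩ ?_
  calc (1 : ℝ) = ∑ j, Ψ.f j x := (Ψ.sum_one x).symm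
    _ ≤ ∑ j, Ψ.f j x * condTopStatPU Φ (Ψ.f j) := Finset.sum_le_sum fun j _ => by
      rcases (Ψ.nonneg j x).eq_or_lt with h | h
      · simp [← h]
      · exact le_mul_of_one_le_right h.le (Φ.one_le_supSum (subset_tsupport _ h.ne'))

end CondTopStat

section TailEntropy

variable {X : Type*} [PseudoMetricSpace X] {T : X → X} {Φ Ψ : PartUnity X}
  {CU CV : FinOpenCover X} {δ c : ℝ}

lemma tailStat_le_maxCondCoverNum_mul (hT : Continuous T)
    (hΨ : ∀ j, ∃ i, tsupport (Ψ.f j) ⊆ CV.U i)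
    (hCU : ∀ i, ∀ x ∈ CU.U i, ∀ y ∈ CU.U i, dist x y < δ)
    (hΦ : ∀ S : Set X, (∀ x ∈ S, ∀ y ∈ S, dist x y < δ) → Φ.supSum S ≤ c) (n : ℕ) :
    tailStat T Φ Ψ n ≤ maxCondCoverNum T CU CV n * c ^ n := by
  have hc : 0 ≤ c := (Φ.supSum_nonneg ∅).trans (hΦ ∅ (by simp))
  rw [tailStat_eq_condTopStat]
  refine condTopStat_le (by positivity) fun j => ?_
  obtain ⟨τ, hτ⟩ := tsupport_dyn_subset_dynSet hT hΨ n j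
  have hσ (σ : Fin n → Fin CU.n) :
      (PartUnity.dyn T Φ n).supSum (dynSet T CV.U n τ ∩ dynSet T CU.U n σ) ≤ c ^ n :=
    PartUnity.supSum_dyn_le_pow hΦ n _ fun i hi x hx y hy =>
      hCU (σ ⟨i, hi⟩) _ (mem_iInter.1 hx.2 ⟨i, hi⟩) _ (mem_iInter.1 hy.2 ⟨i, hi⟩)
  calc condTopStatPU (PartUnity.dyn T Φ n) ((PartUnity.dyn T Ψ n).f j)
      ≤ (PartUnity.dyn T Φ n).supSum (dynSet T CV.U n τ) := PartUnity.supSum_mono _ hτ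
    _ ≤ coverNum (fun σ : Fin n → Fin CU.n => dynSet T CU.U n σ) (dynSet T CV.U n τ) * c ^ n :=
        PartUnity.supSum_le_coverNum_mul _ (CU.subset_iUnion_dynSet T n _) hσ
    _ ≤ maxCondCoverNum T CU CV n * c ^ n := by
        gcongr
        exact_mod_cast coverNum_le_maxCondCoverNum T CU CV τ

lemma tailLoc_le_misCondLoc_add [Nonempty X] (hT : Continuous T)
    (hΨ : ∀ j, ∃ i, tsupport (Ψ.f j) ⊆ CV.U i)
    (hCU : ∀ i, ∀ x ∈ CU.U i, ∀ y ∈ CU.U i, dist x y < δ) {η : ℝ}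
    (hΦ : ∀ S : Set X, (∀ x ∈ S, ∀ y ∈ S, dist x y < δ) → Φ.supSum S ≤ Real.exp η) :
    tailLoc T Φ Ψ ≤ misCondLoc T CU CV + η := by
  rw [misCondLoc_eq_limsup, ← Real.log_exp η]
  refine limsup_log_div_le_of_le_mul_pow (Real.exp_pos η)
    (fun n => (one_le_condTopStat _ _)) (fun n => ?_) (K := CU.n) (fun n => ?_)
    (tailStat_le_maxCondCoverNum_mul hT hΨ hCU hΦ)
  · exact_mod_cast one_le_maxCondCoverNum T CU CV n
  · exact_mod_cast maxCondCoverNum_le_pow T CU CV n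

end TailEntropy

theorem tailEntPU_le_misTail_general {X : Type*} [MetricSpace X] [CompactSpace X] [Nonempty X]
    (T : X → X) (hT : Continuous T) :
    tailEntPU T ≤ misTail T := by
  refine le_iInf fun CV => ?_
  obtain ⟨Ψ, hΨ, hΨCV⟩ := CV.exists_cont_partUnity_subordinate
  refine (iInf_le _ ⟨Ψ, hΨ⟩).trans (iSup_le fun Φ => ?_)
  refine EReal.coe_le_iSup_coe_of_forall_pos fun η hη => ?_
  obtain ⟨δ, hδ, hΦ⟩ := PartUnity.exists_supSum_le_of_dist_lt Φ.2 (Real.one_lt_exp_iff.2 hη)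
  obtain ⟨CU, hCU⟩ := FinOpenCover.exists_dist_lt (X := X) hδ
  exact ⟨CU, tailLoc_le_misCondLoc_add hT hΨCV hCU hΦ⟩

/-- `h̃*(T) ≤ h*(T)`: the topological tail entropy via continuous
partitions of unity is at most Misiurewicz's topological tail entropy. -/
theorem tailEntPU_le_misTail {X : Type*} [MetricSpace X] [CompactSpace X] [Nonempty X]
    [MeasurableSpace X] [BorelSpace X]
    (T : X → X) (hT : Continuous T) (hTsurj : Function.Surjective T) :
    tailEntPU T ≤ misTail T :=
  tailEntPU_le_misTail_general T hT
end
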